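/- Let 𝓡 be an R-variety and let M be an 𝓡-monoid. Then M admits a unique minimal 𝓡-system of generators; that is, there is exactly one set A ⊆ Δ(𝓡) such that 𝓡(A) = M and 𝓡(B) ≠ M for every proper subset B ⊊ A. Moreover, this set A is finite. -/
import Mathlib


/-- A numerical semigroup: a subset of ℕ containing 0, closed under addition,
with finite complement. -/
def IsNumericalSemigroup (S : Set ℕ) : Prop :=
  0 ∈ S ∧ (∀ a ∈ S, ∀ b ∈ S, a + b ∈ S) ∧ Sᶜ.Finite

/-- The Frobenius number of `S` restricted to `T`: `max (T \ S)`. -/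
noncomputable def FrobR (T S : Set ℕ) : ℕ := sSup (T \ S)

/-- The Frobenius number of `S`: `max (ℕ \ S)`. -/
noncomputable def Frob (S : Set ℕ) : ℕ := sSup Sᶜ

/-- `R` is an R-variety with maximum element `Δ`. -/
structure IsRVariety (R : Set (Set ℕ)) (Δ : Set ℕ) : Prop where
  sgrp : ∀ S ∈ R, IsNumericalSemigroup S
  max_mem : Δ ∈ R
  subset_max : ∀ S ∈ R, S ⊆ Δ
  inter_mem : ∀ S ∈ R, ∀ T ∈ R, S ∩ T ∈ R
  step : ∀ S ∈ R, S ≠ Δ → S ∪ {FrobR Δ S} ∈ R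

/-- `P` is a (Frobenius) pseudo-variety with maximum element `Δ`. -/
structure IsPseudoVariety (P : Set (Set ℕ)) (Δ : Set ℕ) : Prop where
  sgrp : ∀ S ∈ P, IsNumericalSemigroup S
  max_mem : Δ ∈ P
  subset_max : ∀ S ∈ P, S ⊆ Δ
  inter_mem : ∀ S ∈ P, ∀ T ∈ P, S ∩ T ∈ P
  step : ∀ S ∈ P, S ≠ Δ → S ∪ {Frob S} ∈ P

/-- `V` is a (Frobenius) variety. -/
structure IsVariety (V : Set (Set ℕ)) : Prop where
  nonempty : V.Nonempty
  sgrp : ∀ S ∈ V, IsNumericalSemigroup S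
  inter_mem : ∀ S ∈ V, ∀ T ∈ V, S ∩ T ∈ V
  step : ∀ S ∈ V, S ≠ Set.univ → S ∪ {Frob S} ∈ V

/-- `M` is an `F`-monoid: an intersection of a nonempty subfamily of `F`. -/
def IsFMonoid (F : Set (Set ℕ)) (M : Set ℕ) : Prop :=
  ∃ G : Set (Set ℕ), G ⊆ F ∧ G.Nonempty ∧ M = ⋂₀ G

/-- The `F`-monoid generated by `A`: the intersection of all `F`-monoids containing `A`. -/
def FGen (F : Set (Set ℕ)) (A : Set ℕ) : Set ℕ :=
  ⋂₀ {M | IsFMonoid F M ∧ A ⊆ M}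

/-- `A` is a minimal `F`-system of generators of `M`. -/
def IsMinGenSystem (F : Set (Set ℕ)) (A M : Set ℕ) : Prop :=
  FGen F A = M ∧ ∀ B ⊂ A, FGen F B ≠ M

/-- A submonoid of `(ℕ, +)`. -/
def IsNatSubmonoid (M : Set ℕ) : Prop :=
  0 ∈ M ∧ ∀ a ∈ M, ∀ b ∈ M, a + b ∈ M

/-- The chain of `S` restricted to `Δ`. -/
def RestrictedChain (S Δ : Set ℕ) : Set (Set ℕ) :=
  {X | ∃ n : ℕ, X = S ∪ {x ∈ Δ | n ≤ x}}

section Aux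

variable {R : Set (Set ℕ)} {Δ : Set ℕ}

lemma fmonoid_zero (hR : IsRVariety R Δ) {M : Set ℕ} (hM : IsFMonoid R M) : 0 ∈ M := by
  obtain ⟨G, hGR, -, rfl⟩ := hM
  exact Set.mem_sInter.2 fun S hS => (hR.sgrp S (hGR hS)).1

lemma fmonoid_add (hR : IsRVariety R Δ) {M : Set ℕ} (hM : IsFMonoid R M) :
    ∀ a ∈ M, ∀ b ∈ M, a + b ∈ M := by
  obtain ⟨G, hGR, -, rfl⟩ := hM
  intro a ha b hb
  exact Set.mem_sInter.2 fun S hS =>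
    (hR.sgrp S (hGR hS)).2.1 a (Set.mem_sInter.1 ha S hS) b (Set.mem_sInter.1 hb S hS)

lemma fmonoid_subset (hR : IsRVariety R Δ) {M : Set ℕ} (hM : IsFMonoid R M) : M ⊆ Δ := by
  obtain ⟨G, hGR, ⟨S0, hS0⟩, rfl⟩ := hM
  exact (Set.sInter_subset_of_mem hS0).trans (hR.subset_max S0 (hGR hS0))

lemma subset_fgen {A : Set ℕ} : A ⊆ FGen R A :=
  fun a ha => Set.mem_sInter.2 fun _ hN => hN.2 ha

lemma fgen_le {A M : Set ℕ} (hM : IsFMonoid R M) (hAM : A ⊆ M) : FGen R A ⊆ M :=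
  Set.sInter_subset_of_mem ⟨hM, hAM⟩

lemma fgen_mono {A B : Set ℕ} (h : A ⊆ B) : FGen R A ⊆ FGen R B := by
  intro x hx
  exact Set.mem_sInter.2 fun N hN => Set.mem_sInter.1 hx N ⟨hN.1, h.trans hN.2⟩

lemma fgen_zero (hR : IsRVariety R Δ) (A : Set ℕ) : 0 ∈ FGen R A :=
  Set.mem_sInter.2 fun _ hN => fmonoid_zero hR hN.1

lemma fgen_add (hR : IsRVariety R Δ) {A : Set ℕ} {a b : ℕ}
    (ha : a ∈ FGen R A) (hb : b ∈ FGen R A) : a + b ∈ FGen R A :=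
  Set.mem_sInter.2 fun N hN =>
    fmonoid_add hR hN.1 a (Set.mem_sInter.1 ha N hN) b (Set.mem_sInter.1 hb N hN)

lemma fgen_eq (hR : IsRVariety R Δ) {A : Set ℕ} (hA : A ⊆ Δ) :
    FGen R A = ⋂₀ {S | S ∈ R ∧ A ⊆ S} := by
  apply Set.Subset.antisymm
  · apply Set.sInter_subset_of_mem
    refine ⟨⟨{S | S ∈ R ∧ A ⊆ S}, fun S hS => hS.1, ⟨Δ, hR.max_mem, hA⟩, rfl⟩, ?_⟩
    exact fun a ha => Set.mem_sInter.2 fun S hS => hS.2 ha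
  · intro x hx
    apply Set.mem_sInter.2
    rintro N ⟨⟨G, hGR, hGne, rfl⟩, hAN⟩
    apply Set.mem_sInter.2
    intro S hSG
    exact Set.mem_sInter.1 hx S ⟨hGR hSG, fun a ha => Set.mem_sInter.1 (hAN ha) S hSG⟩

lemma fgen_fmonoid (hR : IsRVariety R Δ) {A : Set ℕ} (hA : A ⊆ Δ) :
    IsFMonoid R (FGen R A) := by
  rw [fgen_eq hR hA]
  exact ⟨{S | S ∈ R ∧ A ⊆ S}, fun S hS => hS.1, ⟨Δ, hR.max_mem, hA⟩, rfl⟩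

/-- Key chain lemma: adjoining a final segment of `Δ` to a member of `R` stays in `R`. -/
lemma chain_mem (hR : IsRVariety R Δ) {S : Set ℕ} (hS : S ∈ R) (n : ℕ) :
    S ∪ {y | y ∈ Δ ∧ n < y} ∈ R := by
  have hfin : (Δ \ S).Finite := ((hR.sgrp S hS).2.2).subset (fun y hy => hy.2)
  obtain ⟨b, hb⟩ := hfin.bddAbove
  suffices h : ∀ d n, (∀ y ∈ Δ \ S, y ≤ n + d) → S ∪ {y | y ∈ Δ ∧ n < y} ∈ R by
    exact h b n (fun y hy => le_trans (hb hy) (Nat.le_add_left b n))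
  intro d
  induction d with
  | zero =>
    intro n hn
    have heq : S ∪ {y | y ∈ Δ ∧ n < y} = S := by
      apply Set.Subset.antisymm
      · rintro y (hy | ⟨h1, h2⟩)
        · exact hy
        · by_contra hyS
          have := hn y ⟨h1, hyS⟩
          omega
      · exact Set.subset_union_left
    rw [heq]; exact hS
  | succ d ih =>
    intro n hn
    have hS1 : S ∪ {y | y ∈ Δ ∧ n + 1 < y} ∈ R := by
      apply ih
      intro y hy
      have := hn y hy
      omega
    by_cases hc : n + 1 ∈ Δ ∧ n + 1 ∉ S
    · set S1 := S ∪ {y | y ∈ Δ ∧ n + 1 < y} with hS1def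
      have hmem : n + 1 ∈ Δ \ S1 := by
        refine ⟨hc.1, ?_⟩
        rintro (h | ⟨-, h⟩)
        · exact hc.2 h
        · omega
      have hne : S1 ≠ Δ := by
        intro h
        rw [h] at hmem
        exact hmem.2 hmem.1
      have hfr : FrobR Δ S1 = n + 1 := by
        apply le_antisymm
        · apply csSup_le ⟨n + 1, hmem⟩
          rintro y ⟨h1, h2⟩
          by_contra hy
          exact h2 (Or.inr ⟨h1, by omega⟩)
        · apply le_csSup ⟨n + 1, ?_⟩ hmem
          rintro y ⟨h1, h2⟩
          by_contra hy
          exact h2 (Or.inr ⟨h1, by omega⟩)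
      have hstep := hR.step S1 hS1 hne
      rw [hfr] at hstep
      have heq : S ∪ {y | y ∈ Δ ∧ n < y} = S1 ∪ {n + 1} := by
        ext y
        constructor
        · rintro (hy | ⟨h1, h2⟩)
          · exact Or.inl (Or.inl hy)
          · rcases eq_or_lt_of_le (Nat.succ_le_of_lt h2) with h | h
            · exact Or.inr (by simpa using h.symm)
            · exact Or.inl (Or.inr ⟨h1, h⟩)
        · rintro (hy | hy)
          · rw [hS1def] at hy
            rcases hy with hy | hy
            · exact Or.inl hy
            · exact Or.inr ⟨hy.1, lt_trans (Nat.lt_succ_self n) hy.2⟩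
          · simp only [Set.mem_singleton_iff] at hy
            exact Or.inr ⟨by rw [hy]; exact hc.1, by omega⟩
      rw [heq]; exact hstep
    · have heq : S ∪ {y | y ∈ Δ ∧ n < y} = S ∪ {y | y ∈ Δ ∧ n + 1 < y} := by
        ext y
        constructor
        · rintro (hy | ⟨h1, h2⟩)
          · exact Or.inl hy
          · rcases eq_or_lt_of_le (Nat.succ_le_of_lt h2) with h | h
            · left
              subst h
              by_contra hyS
              exact hc ⟨h1, hyS⟩
            · exact Or.inr ⟨h1, h⟩
        · rintro (hy | ⟨h1, h2⟩)
          · exact Or.inl hy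
          · exact Or.inr ⟨h1, by omega⟩
      rw [heq]; exact hS1

/-- Key lemma: an element of `FGen R A` not in `A` is generated by the elements of `A`
below it. -/
lemma fgen_lt (hR : IsRVariety R Δ) {A : Set ℕ} (hA : A ⊆ Δ) {x : ℕ}
    (hx : x ∈ FGen R A) (hxA : x ∉ A) : x ∈ FGen R {a | a ∈ A ∧ a < x} := by
  set B := {a | a ∈ A ∧ a < x} with hBdef
  have hB : B ⊆ Δ := fun a ha => hA ha.1
  set Tail := {y | y ∈ Δ ∧ x < y} with hTdef
  set T := FGen R B ∪ Tail with hTdef2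
  have hTmon : IsFMonoid R T := by
    refine ⟨(fun S0 => S0 ∪ Tail) '' {S | S ∈ R ∧ B ⊆ S}, ?_, ?_, ?_⟩
    · rintro S ⟨S0, hS0, rfl⟩
      exact chain_mem hR hS0.1 x
    · exact ⟨Δ ∪ Tail, Δ, ⟨hR.max_mem, hB⟩, rfl⟩
    · rw [hTdef2, fgen_eq hR hB]
      ext y
      simp only [Set.mem_union, Set.mem_sInter, Set.mem_image, Set.mem_setOf_eq]
      constructor
      · rintro (hy | hy)
        · rintro W ⟨S0, hS0, rfl⟩
          exact Or.inl (hy S0 hS0)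
        · rintro W ⟨S0, hS0, rfl⟩
          exact Or.inr hy
      · intro h
        by_cases hyT : y ∈ Tail
        · exact Or.inr hyT
        · left
          intro S0 hS0
          rcases h (S0 ∪ Tail) ⟨S0, hS0, rfl⟩ with h' | h'
          · exact h'
          · exact absurd h' hyT
  have hAT : A ⊆ T := by
    intro a ha
    rcases lt_trichotomy a x with h | h | h
    · exact Or.inl (subset_fgen ⟨ha, h⟩)
    · exact absurd (h ▸ ha) hxA
    · exact Or.inr ⟨hA ha, h⟩
  have hxT : x ∈ T := fgen_le hTmon hAT hx
  rcases hxT with h | h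
  · exact h
  · exact absurd h.2 (lt_irrefl x)

end Aux

/-- Every `𝓡`-monoid admits a unique minimal `𝓡`-system of
generators, and it is finite. -/
theorem exists_unique_minGenSystem (R : Set (Set ℕ)) (Δ : Set ℕ)
    (hR : IsRVariety R Δ) (M : Set ℕ) (hM : IsFMonoid R M) :
    ∃ A : Set ℕ, (A ⊆ Δ ∧ IsMinGenSystem R A M ∧ A.Finite) ∧
      ∀ B : Set ℕ, B ⊆ Δ → IsMinGenSystem R B M → B = A := by
  classical
  have hMΔ : M ⊆ Δ := fmonoid_subset hR hM
  have hM0 : 0 ∈ M := fmonoid_zero hR hM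
  have hMadd := fmonoid_add hR hM
  set A := {m | m ∈ M ∧ m ∉ FGen R (M \ {m})} with hAdef
  have hAM : A ⊆ M := fun m hm => hm.1
  have hAΔ : A ⊆ Δ := hAM.trans hMΔ
  -- A is contained in every generating set
  have hAmin : ∀ B : Set ℕ, FGen R B = M → A ⊆ B := by
    intro B hB m hm
    by_contra hmB
    have hBsub : B ⊆ M \ {m} := by
      intro b hb
      refine ⟨?_, fun h => hmB (h ▸ hb)⟩
      have hbF : b ∈ FGen R B := subset_fgen hb
      rwa [hB] at hbF
    have h2 : FGen R B ⊆ FGen R (M \ {m}) := fgen_mono hBsub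
    rw [hB] at h2
    exact hm.2 (h2 hm.1)
  -- A generates M
  have hAgen : FGen R A = M := by
    apply Set.Subset.antisymm (fgen_le hM hAM)
    by_contra hne
    have hex : ∃ x, x ∈ M ∧ x ∉ FGen R A := by
      by_contra h
      push_neg at h
      exact hne h
    have hx := Nat.find_spec hex
    set x := Nat.find hex with hxdef
    have hxA : x ∉ A := fun h => hx.2 (subset_fgen h)
    have hxgen : x ∈ FGen R (M \ {x}) := by
      by_contra h
      exact hxA ⟨hx.1, h⟩
    have hsub : M \ {x} ⊆ Δ := (Set.diff_subset).trans hMΔ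
    have hxlt : x ∈ FGen R {a | a ∈ M \ {x} ∧ a < x} :=
      fgen_lt hR hsub hxgen (fun h => h.2 rfl)
    have hsmall : {a | a ∈ M \ {x} ∧ a < x} ⊆ FGen R A := by
      rintro a ⟨⟨haM, -⟩, hax⟩
      by_contra h
      exact Nat.find_min hex hax ⟨haM, h⟩
    have : FGen R {a | a ∈ M \ {x} ∧ a < x} ⊆ FGen R A :=
      fgen_le (fgen_fmonoid hR hAΔ) hsmall
    exact hx.2 (this hxlt)
  -- 0 is not in A
  have h0A : 0 ∉ A := fun h => h.2 (fgen_zero hR _)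
  -- A is finite
  have hAfin : A.Finite := by
    by_cases hM1 : ∃ m, m ∈ M ∧ m ≠ 0
    · obtain ⟨m₀, hm₀M, hm₀⟩ := hM1
      have hmul : ∀ k : ℕ, k * m₀ ∈ M := by
        intro k
        induction k with
        | zero => simpa using hM0
        | succ k ih => simpa [Nat.succ_mul] using hMadd _ ih _ hm₀M
      have hinj : Set.InjOn (· % m₀) A := by
        have key : ∀ a ∈ A, ∀ b ∈ A, a % m₀ = b % m₀ → a < b → False := by
          intro a ha b hb hmod hab
          have haM : a ∈ M := ha.1
          have ha0 : a ≠ 0 := fun h => h0A (h ▸ ha)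
          have hdvd : m₀ ∣ b - a :=
            Nat.dvd_of_mod_eq_zero (Nat.sub_mod_eq_zero_of_mod_eq hmod.symm)
          obtain ⟨k, hk⟩ := hdvd
          have hbaM : b - a ∈ M := by
            rw [hk, mul_comm]
            exact hmul k
          have h1 : a ∈ M \ {b} := ⟨haM, by simp; omega⟩
          have h2 : b - a ∈ M \ {b} := ⟨hbaM, by simp; omega⟩
          have : b ∈ FGen R (M \ {b}) := by
            have := fgen_add hR (subset_fgen h1) (subset_fgen h2)
            have heq : a + (b - a) = b := by omega
            rwa [heq] at this
          exact hb.2 this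
        intro a ha b hb hmod
        rcases lt_trichotomy a b with h | h | h
        · exact absurd (key a ha b hb hmod h) (not_false)
        · exact h
        · exact absurd (key b hb a ha hmod.symm h) (not_false)
      apply Set.Finite.of_finite_image _ hinj
      apply Set.Finite.subset (Set.finite_Iio m₀)
      rintro y ⟨a, ha, rfl⟩
      have : m₀ ≠ 0 := hm₀
      exact Nat.mod_lt a (Nat.pos_of_ne_zero this)
    · push_neg at hM1
      have : A ⊆ {0} := fun a ha => hM1 a ha.1 ▸ rfl
      exact (Set.finite_singleton 0).subset this
  refine ⟨A, ⟨hAΔ, ⟨hAgen, ?_⟩, hAfin⟩, ?_⟩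
  · intro B hBA hBgen
    exact absurd (hAmin B hBgen) (fun h => hBA.2 h)
  · rintro B hBΔ ⟨hBgen, hBmin⟩
    have hAB : A ⊆ B := hAmin B hBgen
    by_contra hne
    exact hBmin A ⟨hAB, fun h => hne (Set.Subset.antisymm h hAB)⟩ hAgen
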